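/- Let f : ℝ → ℝ be infinitely differentiable and x ∈ ℝ. Define the WENO-JS smoothness indicators β₀(h) = (13/12)(f(x−2h)−2f(x−h)+f(x))² + (1/4)(f(x−2h)−4f(x−h)+3f(x))², β₁(h) = (13/12)(f(x−h)−2f(x)+f(x+h))² + (1/4)(f(x+h)−f(x−h))², β₂(h) = (13/12)(f(x)−2f(x+h)+f(x+2h))² + (1/4)(3f(x)−4f(x+h)+f(x+2h))². Then as h → 0⁺: β₀(h) = (f′(x))²h² + ((13/12)(f″(x))² − (2/3)f′(x)f‴(x))h⁴ + (−(13/6)f″(x)f‴(x) + (1/2)f′(x)f⁗(x))h⁵ + O(h⁶); β₁(h) = (f′(x))²h² + ((13/12)(f″(x))² + (1/3)f′(x)f‴(x))h⁴ + O(h⁶); β₂(h) = (f′(x))²h² + ((13/12)(f″(x))² − (2/3)f′(x)f‴(x))h⁴ + ((13/6)f″(x)f‴(x) − (1/2)f′(x)f⁗(x))h⁵ + O(h⁶). -/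

import Mathlib

set_option maxHeartbeats 4000000

open Filter Asymptotics Topology

private lemma taylor6 (g : ℝ → ℝ) (hg : ContDiff ℝ (⊤ : ℕ∞) g) :
    (fun h : ℝ => g h - (g 0 + iteratedDeriv 1 g 0 * h + iteratedDeriv 2 g 0 / 2 * h^2
      + iteratedDeriv 3 g 0 / 6 * h^3 + iteratedDeriv 4 g 0 / 24 * h^4
      + iteratedDeriv 5 g 0 / 120 * h^5)) =O[𝓝[>] (0:ℝ)] fun h => h ^ 6 := by
  have hco : ContDiffOn ℝ (5 + 1 : ℕ) g (Set.Icc (0:ℝ) 1) := (hg.of_le (WithTop.coe_le_coe.mpr le_top)).contDiffOn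
  obtain ⟨C, hC⟩ := exists_taylor_mean_remainder_bound (n := 5) zero_le_one hco
  have hiter : ∀ k : ℕ, k ≤ 5 → iteratedDerivWithin k g (Set.Icc (0:ℝ) 1) 0 = iteratedDeriv k g 0 := by
    intro k hk
    have h1 : HasFTaylorSeriesUpToOn ((6:ℕ) : ℕ∞) g (ftaylorSeries ℝ g) (Set.Icc (0:ℝ) 1) :=
      (contDiff_iff_ftaylorSeries.mp (hg.of_le (by exact_mod_cast le_top))).hasFTaylorSeriesUpToOn _
    have h2 := h1.eq_iteratedFDerivWithin_of_uniqueDiffOn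
      (m := k) (by exact_mod_cast hk.trans (by norm_num)) (uniqueDiffOn_Icc one_pos)
      (Set.left_mem_Icc.mpr zero_le_one)
    rw [iteratedDerivWithin_eq_iteratedFDerivWithin, iteratedDeriv_eq_iteratedFDeriv, ← h2]
    rfl
  have hT : ∀ h : ℝ, taylorWithinEval g 5 (Set.Icc (0:ℝ) 1) 0 h
      = g 0 + iteratedDeriv 1 g 0 * h + iteratedDeriv 2 g 0 / 2 * h^2
      + iteratedDeriv 3 g 0 / 6 * h^3 + iteratedDeriv 4 g 0 / 24 * h^4
      + iteratedDeriv 5 g 0 / 120 * h^5 := by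
    intro h
    rw [taylor_within_apply]
    simp only [Finset.sum_range_succ, Finset.sum_range_zero, smul_eq_mul,
      hiter 0 (by norm_num), hiter 1 (by norm_num), hiter 2 (by norm_num),
      hiter 3 (by norm_num), hiter 4 (by norm_num), hiter 5 (by norm_num),
      iteratedDeriv_zero, sub_zero]
    norm_num [Nat.factorial]
    ring
  refine IsBigO.of_bound C ?_
  filter_upwards [Ioc_mem_nhdsGT_of_mem (by norm_num : (0:ℝ) ∈ Set.Ico (0:ℝ) 1)] with h hh
  have hb := hC h ⟨hh.1.le, hh.2⟩
  rw [hT h] at hb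
  simpa [abs_of_pos hh.1, abs_of_pos (pow_pos hh.1 6)] using hb

private lemma shiftT (f : ℝ → ℝ) (hf : ContDiff ℝ (⊤ : ℕ∞) f) (x c : ℝ) :
    (fun h : ℝ => f (x + c * h) - (f x + c * deriv f x * h
      + c^2 * iteratedDeriv 2 f x / 2 * h^2 + c^3 * iteratedDeriv 3 f x / 6 * h^3
      + c^4 * iteratedDeriv 4 f x / 24 * h^4 + c^5 * iteratedDeriv 5 f x / 120 * h^5))
      =O[𝓝[>] (0:ℝ)] fun h => h ^ 6 := by
  have hshift : ContDiff ℝ (⊤ : ℕ∞) (fun z : ℝ => f (x + z)) :=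
    hf.comp (contDiff_const.add contDiff_id)
  have hg : ContDiff ℝ (⊤ : ℕ∞) (fun h : ℝ => f (x + c * h)) :=
    hshift.comp (contDiff_const.mul contDiff_id)
  have hk : ∀ k : ℕ, iteratedDeriv k (fun h : ℝ => f (x + c * h)) 0 = c ^ k * iteratedDeriv k f x := by
    intro k
    have h2 : iteratedDeriv k (fun h : ℝ => f (x + c * h)) 0
        = c ^ k * iteratedDeriv k (fun z : ℝ => f (x + z)) (c * 0) :=
      congrFun (iteratedDeriv_comp_const_mul (hshift.of_le (by exact_mod_cast le_top)) c) 0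
    rw [h2, iteratedDeriv_comp_const_add]
    norm_num
  have := taylor6 _ hg
  simp only [hk] at this
  refine this.congr (fun h => ?_) (fun _ => rfl)
  simp only [iteratedDeriv_one, mul_zero, add_zero, pow_one]

private lemma h6_isBigO {Q : ℝ → ℝ} (hQ : ContinuousAt Q 0) :
    (fun h : ℝ => h^6 * Q h) =O[𝓝[>] (0:ℝ)] fun h => h^6 := by
  simpa using (isBigO_refl (fun h : ℝ => h^6) (𝓝[>] (0:ℝ))).mul
    ((hQ.tendsto.mono_left nhdsWithin_le_nhds).isBigO_one ℝ)

private lemma err_isBigO {e p : ℝ → ℝ} (he : e =O[𝓝[>] (0:ℝ)] fun h => h^6)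
    (hp : ContinuousAt p 0) :
    (fun h => e h * (e h + 2 * p h)) =O[𝓝[>] (0:ℝ)] fun h => h^6 := by
  have h0 : Filter.Tendsto (fun h : ℝ => h^6) (𝓝[>] (0:ℝ)) (𝓝 0) := by
    have : Filter.Tendsto (fun h : ℝ => h^6) (𝓝 (0:ℝ)) (𝓝 (0^6)) :=
      (continuous_pow 6).tendsto (0:ℝ)
    simpa using this.mono_left nhdsWithin_le_nhds
  have he0 : Filter.Tendsto e (𝓝[>] (0:ℝ)) (𝓝 0) := he.trans_tendsto h0
  have h1 : Filter.Tendsto (fun h => e h + 2 * p h) (𝓝[>] (0:ℝ)) (𝓝 (0 + 2 * p 0)) :=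
    he0.add ((hp.tendsto.mono_left nhdsWithin_le_nhds).const_mul 2)
  simpa using he.mul (h1.isBigO_one ℝ)
/-- The WENO-JS smoothness indicators of `f` at center `x` with mesh size `h`. -/
noncomputable def betaJS (f : ℝ → ℝ) (x h : ℝ) : Fin 3 → ℝ :=
  ![(13/12) * (f (x - 2*h) - 2 * f (x - h) + f x)^2
      + (1/4) * (f (x - 2*h) - 4 * f (x - h) + 3 * f x)^2,
    (13/12) * (f (x - h) - 2 * f x + f (x + h))^2
      + (1/4) * (f (x + h) - f (x - h))^2,
    (13/12) * (f x - 2 * f (x + h) + f (x + 2*h))^2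
      + (1/4) * (3 * f x - 4 * f (x + h) + f (x + 2*h))^2]

/-- Taylor expansions of the WENO-JS smoothness indicators as `h → 0⁺`. -/
theorem betaJS_taylor_expansion (f : ℝ → ℝ) (hf : ContDiff ℝ (⊤ : ℕ∞) f) (x : ℝ) :
    ((fun h : ℝ => betaJS f x h 0 -
        ((deriv f x)^2 * h^2
          + ((13/12) * (iteratedDeriv 2 f x)^2
              - (2/3) * deriv f x * iteratedDeriv 3 f x) * h^4
          + (-(13/6) * iteratedDeriv 2 f x * iteratedDeriv 3 f x
              + (1/2) * deriv f x * iteratedDeriv 4 f x) * h^5))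
      =O[𝓝[>] (0:ℝ)] fun h => h ^ 6)
    ∧ ((fun h : ℝ => betaJS f x h 1 -
        ((deriv f x)^2 * h^2
          + ((13/12) * (iteratedDeriv 2 f x)^2
              + (1/3) * deriv f x * iteratedDeriv 3 f x) * h^4))
      =O[𝓝[>] (0:ℝ)] fun h => h ^ 6)
    ∧ ((fun h : ℝ => betaJS f x h 2 -
        ((deriv f x)^2 * h^2
          + ((13/12) * (iteratedDeriv 2 f x)^2
              - (2/3) * deriv f x * iteratedDeriv 3 f x) * h^4
          + ((13/6) * iteratedDeriv 2 f x * iteratedDeriv 3 f x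
              - (1/2) * deriv f x * iteratedDeriv 4 f x) * h^5))
      =O[𝓝[>] (0:ℝ)] fun h => h ^ 6) := by
  have hEm2 : (fun h : ℝ => (f (x - 2*h) - (f x + (-2:ℝ) * deriv f x * h + (2:ℝ) * iteratedDeriv 2 f x * h^2 + (-4/3:ℝ) * iteratedDeriv 3 f x * h^3 + (2/3:ℝ) * iteratedDeriv 4 f x * h^4 + (-4/15:ℝ) * iteratedDeriv 5 f x * h^5))) =O[𝓝[>] (0:ℝ)] fun h => h ^ 6 := by
    refine (shiftT f hf x (-2)).congr (fun h => ?_) (fun _ => rfl)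
    rw [show x + (-2 : ℝ) * h = x - 2*h by ring]; ring
  have hEm1 : (fun h : ℝ => (f (x - h) - (f x + (-1:ℝ) * deriv f x * h + (1/2:ℝ) * iteratedDeriv 2 f x * h^2 + (-1/6:ℝ) * iteratedDeriv 3 f x * h^3 + (1/24:ℝ) * iteratedDeriv 4 f x * h^4 + (-1/120:ℝ) * iteratedDeriv 5 f x * h^5))) =O[𝓝[>] (0:ℝ)] fun h => h ^ 6 := by
    refine (shiftT f hf x (-1)).congr (fun h => ?_) (fun _ => rfl)
    rw [show x + (-1 : ℝ) * h = x - h by ring]; ring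
  have hE1 : (fun h : ℝ => (f (x + h) - (f x + (1:ℝ) * deriv f x * h + (1/2:ℝ) * iteratedDeriv 2 f x * h^2 + (1/6:ℝ) * iteratedDeriv 3 f x * h^3 + (1/24:ℝ) * iteratedDeriv 4 f x * h^4 + (1/120:ℝ) * iteratedDeriv 5 f x * h^5))) =O[𝓝[>] (0:ℝ)] fun h => h ^ 6 := by
    refine (shiftT f hf x 1).congr (fun h => ?_) (fun _ => rfl)
    rw [show x + (1 : ℝ) * h = x + h by ring]; ring
  have hE2 : (fun h : ℝ => (f (x + 2*h) - (f x + (2:ℝ) * deriv f x * h + (2:ℝ) * iteratedDeriv 2 f x * h^2 + (4/3:ℝ) * iteratedDeriv 3 f x * h^3 + (2/3:ℝ) * iteratedDeriv 4 f x * h^4 + (4/15:ℝ) * iteratedDeriv 5 f x * h^5))) =O[𝓝[>] (0:ℝ)] fun h => h ^ 6 := by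
    refine (shiftT f hf x 2).congr (fun h => ?_) (fun _ => rfl)
    rw [show x + (2 : ℝ) * h = x + 2*h by ring]; ring
  refine ⟨?_, ?_, ?_⟩
  · have key : (fun h : ℝ => betaJS f x h 0 -
        ((deriv f x)^2 * h^2
          + ((13/12) * (iteratedDeriv 2 f x)^2
              - (2/3) * deriv f x * iteratedDeriv 3 f x) * h^4
          + (-(13/6) * iteratedDeriv 2 f x * iteratedDeriv 3 f x
              + (1/2) * deriv f x * iteratedDeriv 4 f x) * h^5)) = fun h : ℝ => h^6 * ((43/36:ℝ) * (iteratedDeriv 3 f x)^2 + (91/72:ℝ) * (iteratedDeriv 2 f x) * (iteratedDeriv 4 f x) + (-7/30:ℝ) * (deriv f x) * (iteratedDeriv 5 f x) + (-103/72:ℝ) * h * (iteratedDeriv 3 f x) * (iteratedDeriv 4 f x) + (-13/24:ℝ) * h * (iteratedDeriv 2 f x) * (iteratedDeriv 5 f x) + (745/1728:ℝ) * h^2 * (iteratedDeriv 4 f x)^2 + (223/360:ℝ) * h^2 * (iteratedDeriv 3 f x) * (iteratedDeriv 5 f x) + (-539/1440:ℝ) * h^3 * (iteratedDeriv 4 f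 x) * (iteratedDeriv 5 f x) + (1171/14400:ℝ) * h^4 * (iteratedDeriv 5 f x)^2) + 13/12 * (((f (x - 2*h) - (f x + (-2:ℝ) * deriv f x * h + (2:ℝ) * iteratedDeriv 2 f x * h^2 + (-4/3:ℝ) * iteratedDeriv 3 f x * h^3 + (2/3:ℝ) * iteratedDeriv 4 f x * h^4 + (-4/15:ℝ) * iteratedDeriv 5 f x * h^5)) - 2 * (f (x - h) - (f x + (-1:ℝ) * deriv f x * h + (1/2:ℝ) * iteratedDeriv 2 f x * h^2 + (-1/6:ℝ) * iteratedDeriv 3 f x * h^3 + (1/24:ℝ) * iteratedDeriv 4 f x * h^4 + (-1/120:ℝ) * iteratedDeriv 5 f x * h^5))) * (((f (x - 2*h) - (f x + (-2:ℝ) * deriv f x * h + (2:ℝ) * iteratedDeriv 2 f x * h^2 + (-4/3:ℝ) * iteratedDeriv 3 f x * h^3 + (2/3:ℝ) * iteratedDeriv 4 f x * h^4 + (-4/15:ℝ) * iteratedDeriv 5 f x * h^5)) - 2 * (f (x - h) - (f x + (-1:ℝ) * deriv f x * h + (1/2:ℝ) * iteratedDeriv 2 f x * h^2 + (-1/6:ℝ)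 * iteratedDeriv 3 f x * h^3 + (1/24:ℝ) * iteratedDeriv 4 f x * h^4 + (-1/120:ℝ) * iteratedDeriv 5 f x * h^5))) + 2 * ((f x + (-2:ℝ) * deriv f x * h + (2:ℝ) * iteratedDeriv 2 f x * h^2 + (-4/3:ℝ) * iteratedDeriv 3 f x * h^3 + (2/3:ℝ) * iteratedDeriv 4 f x * h^4 + (-4/15:ℝ) * iteratedDeriv 5 f x * h^5) - 2 * (f x + (-1:ℝ) * deriv f x * h + (1/2:ℝ) * iteratedDeriv 2 f x * h^2 + (-1/6:ℝ) * iteratedDeriv 3 f x * h^3 + (1/24:ℝ) * iteratedDeriv 4 f x * h^4 + (-1/120:ℝ) * iteratedDeriv 5 f x * h^5) + f x))) + 1/4 * (((f (x - 2*h) - (f x + (-2:ℝ) * deriv f x * h + (2:ℝ) * iteratedDeriv 2 f x * h^2 + (-4/3:ℝ) * iteratedDeriv 3 f x * h^3 + (2/3:ℝ) * iteratedDeriv 4 f x * h^4 + (-4/15:ℝ) * iteratedDeriv 5 f x * h^5)) - 4 * (f (x - h) - (f x + (-1:ℝ) * deriv f x * h + (1/2:ℝ) * iteratedDeriv 2 f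 x * h^2 + (-1/6:ℝ) * iteratedDeriv 3 f x * h^3 + (1/24:ℝ) * iteratedDeriv 4 f x * h^4 + (-1/120:ℝ) * iteratedDeriv 5 f x * h^5))) * (((f (x - 2*h) - (f x + (-2:ℝ) * deriv f x * h + (2:ℝ) * iteratedDeriv 2 f x * h^2 + (-4/3:ℝ) * iteratedDeriv 3 f x * h^3 + (2/3:ℝ) * iteratedDeriv 4 f x * h^4 + (-4/15:ℝ) * iteratedDeriv 5 f x * h^5)) - 4 * (f (x - h) - (f x + (-1:ℝ) * deriv f x * h + (1/2:ℝ) * iteratedDeriv 2 f x * h^2 + (-1/6:ℝ) * iteratedDeriv 3 f x * h^3 + (1/24:ℝ) * iteratedDeriv 4 f x * h^4 + (-1/120:ℝ) * iteratedDeriv 5 f x * h^5))) + 2 * ((f x + (-2:ℝ) * deriv f x * h + (2:ℝ) * iteratedDeriv 2 f x * h^2 + (-4/3:ℝ) * iteratedDeriv 3 f x * h^3 + (2/3:ℝ) * iteratedDeriv 4 f x * h^4 + (-4/15:ℝ) * iteratedDeriv 5 f x * h^5) - 4 * (f x + (-1:ℝ) * deriv f x * h + (1/2:ℝ) * iteratedDeriv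 2 f x * h^2 + (-1/6:ℝ) * iteratedDeriv 3 f x * h^3 + (1/24:ℝ) * iteratedDeriv 4 f x * h^4 + (-1/120:ℝ) * iteratedDeriv 5 f x * h^5) + 3 * f x))) := by
      funext h
      simp only [betaJS, Matrix.cons_val_zero, Matrix.cons_val_one, Matrix.head_cons,
        Matrix.cons_val_two, Matrix.tail_cons]
      ring
    rw [key]
    refine IsBigO.add (IsBigO.add ?_ ?_) ?_
    · exact h6_isBigO (Continuous.continuousAt (by fun_prop))
    · exact (err_isBigO (hEm2.sub (hEm1.const_mul_left 2)) (Continuous.continuousAt (by fun_prop))).const_mul_left _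
    · exact (err_isBigO (hEm2.sub (hEm1.const_mul_left 4)) (Continuous.continuousAt (by fun_prop))).const_mul_left _
  · have key : (fun h : ℝ => betaJS f x h 1 -
        ((deriv f x)^2 * h^2
          + ((13/12) * (iteratedDeriv 2 f x)^2
              + (1/3) * deriv f x * iteratedDeriv 3 f x) * h^4)) = fun h : ℝ => h^6 * ((1/36:ℝ) * (iteratedDeriv 3 f x)^2 + (13/72:ℝ) * (iteratedDeriv 2 f x) * (iteratedDeriv 4 f x) + (1/60:ℝ) * (deriv f x) * (iteratedDeriv 5 f x) + (13/1728:ℝ) * h^2 * (iteratedDeriv 4 f x)^2 + (1/360:ℝ) * h^2 * (iteratedDeriv 3 f x) * (iteratedDeriv 5 f x) + (1/14400:ℝ) * h^4 * (iteratedDeriv 5 f x)^2) + 13/12 * (((f (x - h) - (f x + (-1:ℝ) * deriv f x * h + (1/2:ℝ) * iteratedDeriv 2 f x * h^2 + (-1/6:ℝ) * iteratedDeriv 3 f x * h^3 + (1/24:ℝ) * iteratedDeriv 4 f x * h^4 + (-1/120:ℝ) * iteratedDeriv 5 f x * h^5)) + (f (x + h) - (f x + (1:ℝ) * deriv f x *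 h + (1/2:ℝ) * iteratedDeriv 2 f x * h^2 + (1/6:ℝ) * iteratedDeriv 3 f x * h^3 + (1/24:ℝ) * iteratedDeriv 4 f x * h^4 + (1/120:ℝ) * iteratedDeriv 5 f x * h^5))) * (((f (x - h) - (f x + (-1:ℝ) * deriv f x * h + (1/2:ℝ) * iteratedDeriv 2 f x * h^2 + (-1/6:ℝ) * iteratedDeriv 3 f x * h^3 + (1/24:ℝ) * iteratedDeriv 4 f x * h^4 + (-1/120:ℝ) * iteratedDeriv 5 f x * h^5)) + (f (x + h) - (f x + (1:ℝ) * deriv f x * h + (1/2:ℝ) * iteratedDeriv 2 f x * h^2 + (1/6:ℝ) * iteratedDeriv 3 f x * h^3 + (1/24:ℝ) * iteratedDeriv 4 f x * h^4 + (1/120:ℝ) * iteratedDeriv 5 f x * h^5))) + 2 * ((f x + (-1:ℝ) * deriv f x * h + (1/2:ℝ) * iteratedDeriv 2 f x * h^2 + (-1/6:ℝ) * iteratedDeriv 3 f x * h^3 + (1/24:ℝ) * iteratedDeriv 4 f x * h^4 + (-1/120:ℝ) * iteratedDeriv 5 f x * h^5) - 2 * f x + (f x + (1:ℝ) * deriv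 f x * h + (1/2:ℝ) * iteratedDeriv 2 f x * h^2 + (1/6:ℝ) * iteratedDeriv 3 f x * h^3 + (1/24:ℝ) * iteratedDeriv 4 f x * h^4 + (1/120:ℝ) * iteratedDeriv 5 f x * h^5)))) + 1/4 * (((f (x + h) - (f x + (1:ℝ) * deriv f x * h + (1/2:ℝ) * iteratedDeriv 2 f x * h^2 + (1/6:ℝ) * iteratedDeriv 3 f x * h^3 + (1/24:ℝ) * iteratedDeriv 4 f x * h^4 + (1/120:ℝ) * iteratedDeriv 5 f x * h^5)) - (f (x - h) - (f x + (-1:ℝ) * deriv f x * h + (1/2:ℝ) * iteratedDeriv 2 f x * h^2 + (-1/6:ℝ) * iteratedDeriv 3 f x * h^3 + (1/24:ℝ) * iteratedDeriv 4 f x * h^4 + (-1/120:ℝ) * iteratedDeriv 5 f x * h^5))) * (((f (x + h) - (f x + (1:ℝ) * deriv f x * h + (1/2:ℝ) * iteratedDeriv 2 f x * h^2 + (1/6:ℝ) * iteratedDeriv 3 f x * h^3 + (1/24:ℝ) * iteratedDeriv 4 f x * h^4 + (1/120:ℝ) * iteratedDeriv 5 f x * h^5)) - (f (x - h) - (f x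 + (-1:ℝ) * deriv f x * h + (1/2:ℝ) * iteratedDeriv 2 f x * h^2 + (-1/6:ℝ) * iteratedDeriv 3 f x * h^3 + (1/24:ℝ) * iteratedDeriv 4 f x * h^4 + (-1/120:ℝ) * iteratedDeriv 5 f x * h^5))) + 2 * ((f x + (1:ℝ) * deriv f x * h + (1/2:ℝ) * iteratedDeriv 2 f x * h^2 + (1/6:ℝ) * iteratedDeriv 3 f x * h^3 + (1/24:ℝ) * iteratedDeriv 4 f x * h^4 + (1/120:ℝ) * iteratedDeriv 5 f x * h^5) - (f x + (-1:ℝ) * deriv f x * h + (1/2:ℝ) * iteratedDeriv 2 f x * h^2 + (-1/6:ℝ) * iteratedDeriv 3 f x * h^3 + (1/24:ℝ) * iteratedDeriv 4 f x * h^4 + (-1/120:ℝ) * iteratedDeriv 5 f x * h^5)))) := by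
      funext h
      simp only [betaJS, Matrix.cons_val_zero, Matrix.cons_val_one, Matrix.head_cons,
        Matrix.cons_val_two, Matrix.tail_cons]
      ring
    rw [key]
    refine IsBigO.add (IsBigO.add ?_ ?_) ?_
    · exact h6_isBigO (Continuous.continuousAt (by fun_prop))
    · exact (err_isBigO (hEm1.add hE1) (Continuous.continuousAt (by fun_prop))).const_mul_left _
    · exact (err_isBigO (hE1.sub hEm1) (Continuous.continuousAt (by fun_prop))).const_mul_left _
  · have key : (fun h : ℝ => betaJS f x h 2 -
        ((deriv f x)^2 * h^2
          + ((13/12) * (iteratedDeriv 2 f x)^2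
              - (2/3) * deriv f x * iteratedDeriv 3 f x) * h^4
          + ((13/6) * iteratedDeriv 2 f x * iteratedDeriv 3 f x
              - (1/2) * deriv f x * iteratedDeriv 4 f x) * h^5)) = fun h : ℝ => h^6 * ((43/36:ℝ) * (iteratedDeriv 3 f x)^2 + (91/72:ℝ) * (iteratedDeriv 2 f x) * (iteratedDeriv 4 f x) + (-7/30:ℝ) * (deriv f x) * (iteratedDeriv 5 f x) + (103/72:ℝ) * h * (iteratedDeriv 3 f x) * (iteratedDeriv 4 f x) + (13/24:ℝ) * h * (iteratedDeriv 2 f x) * (iteratedDeriv 5 f x) + (745/1728:ℝ) * h^2 * (iteratedDeriv 4 f x)^2 + (223/360:ℝ) * h^2 * (iteratedDeriv 3 f x) * (iteratedDeriv 5 f x) + (539/1440:ℝ) * h^3 * (iteratedDeriv 4 f x) * (iteratedDeriv 5 f x) + (1171/14400:ℝ) * h^4 * (iteratedDeriv 5 f x)^2) + 13/12 * (((f (x + 2*h) - (f x + (2:ℝ) * deriv f x * h + (2:ℝ) * iteratedDeriv 2 f x * h^2 + (4/3:ℝ) * iteratedDeriv 3 f x * h^3 + (2/3:ℝ) * iteratedDeriv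 4 f x * h^4 + (4/15:ℝ) * iteratedDeriv 5 f x * h^5)) - 2 * (f (x + h) - (f x + (1:ℝ) * deriv f x * h + (1/2:ℝ) * iteratedDeriv 2 f x * h^2 + (1/6:ℝ) * iteratedDeriv 3 f x * h^3 + (1/24:ℝ) * iteratedDeriv 4 f x * h^4 + (1/120:ℝ) * iteratedDeriv 5 f x * h^5))) * (((f (x + 2*h) - (f x + (2:ℝ) * deriv f x * h + (2:ℝ) * iteratedDeriv 2 f x * h^2 + (4/3:ℝ) * iteratedDeriv 3 f x * h^3 + (2/3:ℝ) * iteratedDeriv 4 f x * h^4 + (4/15:ℝ) * iteratedDeriv 5 f x * h^5)) - 2 * (f (x + h) - (f x + (1:ℝ) * deriv f x * h + (1/2:ℝ) * iteratedDeriv 2 f x * h^2 + (1/6:ℝ) * iteratedDeriv 3 f x * h^3 + (1/24:ℝ) * iteratedDeriv 4 f x * h^4 + (1/120:ℝ) * iteratedDeriv 5 f x * h^5))) + 2 * (f x - 2 * (f x + (1:ℝ) * deriv f x * h + (1/2:ℝ) * iteratedDeriv 2 f x * h^2 + (1/6:ℝ) * iteratedDeriv 3 f x * h^3 + (1/24:ℝ)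 * iteratedDeriv 4 f x * h^4 + (1/120:ℝ) * iteratedDeriv 5 f x * h^5) + (f x + (2:ℝ) * deriv f x * h + (2:ℝ) * iteratedDeriv 2 f x * h^2 + (4/3:ℝ) * iteratedDeriv 3 f x * h^3 + (2/3:ℝ) * iteratedDeriv 4 f x * h^4 + (4/15:ℝ) * iteratedDeriv 5 f x * h^5)))) + 1/4 * (((f (x + 2*h) - (f x + (2:ℝ) * deriv f x * h + (2:ℝ) * iteratedDeriv 2 f x * h^2 + (4/3:ℝ) * iteratedDeriv 3 f x * h^3 + (2/3:ℝ) * iteratedDeriv 4 f x * h^4 + (4/15:ℝ) * iteratedDeriv 5 f x * h^5)) - 4 * (f (x + h) - (f x + (1:ℝ) * deriv f x * h + (1/2:ℝ) * iteratedDeriv 2 f x * h^2 + (1/6:ℝ) * iteratedDeriv 3 f x * h^3 + (1/24:ℝ) * iteratedDeriv 4 f x * h^4 + (1/120:ℝ) * iteratedDeriv 5 f x * h^5))) * (((f (x + 2*h) - (f x + (2:ℝ) * deriv f x * h + (2:ℝ) * iteratedDeriv 2 f x * h^2 + (4/3:ℝ) * iteratedDeriv 3 f x * h^3 + (2/3:ℝ)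 * iteratedDeriv 4 f x * h^4 + (4/15:ℝ) * iteratedDeriv 5 f x * h^5)) - 4 * (f (x + h) - (f x + (1:ℝ) * deriv f x * h + (1/2:ℝ) * iteratedDeriv 2 f x * h^2 + (1/6:ℝ) * iteratedDeriv 3 f x * h^3 + (1/24:ℝ) * iteratedDeriv 4 f x * h^4 + (1/120:ℝ) * iteratedDeriv 5 f x * h^5))) + 2 * (3 * f x - 4 * (f x + (1:ℝ) * deriv f x * h + (1/2:ℝ) * iteratedDeriv 2 f x * h^2 + (1/6:ℝ) * iteratedDeriv 3 f x * h^3 + (1/24:ℝ) * iteratedDeriv 4 f x * h^4 + (1/120:ℝ) * iteratedDeriv 5 f x * h^5) + (f x + (2:ℝ) * deriv f x * h + (2:ℝ) * iteratedDeriv 2 f x * h^2 + (4/3:ℝ) * iteratedDeriv 3 f x * h^3 + (2/3:ℝ) * iteratedDeriv 4 f x * h^4 + (4/15:ℝ) * iteratedDeriv 5 f x * h^5)))) := by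
      funext h
      simp only [betaJS, Matrix.cons_val_zero, Matrix.cons_val_one, Matrix.head_cons,
        Matrix.cons_val_two, Matrix.tail_cons]
      ring
    rw [key]
    refine IsBigO.add (IsBigO.add ?_ ?_) ?_
    · exact h6_isBigO (Continuous.continuousAt (by fun_prop))
    · exact (err_isBigO (hE2.sub (hE1.const_mul_left 2)) (Continuous.continuousAt (by fun_prop))).const_mul_left _
    · exact (err_isBigO (hE2.sub (hE1.const_mul_left 4)) (Continuous.continuousAt (by fun_prop))).const_mul_left _
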